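/- For every fixed z ∈ ℝ, the four series Σ_{n≥0} (−1)^n z^{2n+1} p_{2n+1}(x), Σ_{n≥0} (−1)^n z^{2n+1} q_{2n+1}(x), Σ_{n≥0} (−1)^n z^{2n} p_{2n}(x) and Σ_{n≥0} (−1)^n z^{2n} q_{2n}(x) converge absolutely, uniformly in x on [0,1]; in particular each of these series of functions is summable with Σ_{n≥0} |z|^{2n+1} p_{2n+1}(x) ≤ |z| e^{z^2} and analogously for the other three series. -/

import Mathlib

open MeasureTheory Real Filter Nat

/-- Iterated integrals `p_n` w.r.t. a measure `ν`: `p_0 = 1`,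
`p_n(x) = ∫_0^x p_{n-1} dν` if `n` odd, `p_n(x) = ∫_0^x p_{n-1} dt` if `n` even. -/
noncomputable def pIter (ν : Measure ℝ) : ℕ → ℝ → ℝ
  | 0 => fun _ => 1
  | (n+1) => fun x =>
      if Odd (n+1) then ∫ t in Set.Ioc (0:ℝ) x, pIter ν n t ∂ν
      else ∫ t in Set.Ioc (0:ℝ) x, pIter ν n t

/-- Iterated integrals `q_n` w.r.t. a measure `ν`: `q_0 = 1`,
`q_n(x) = ∫_0^x q_{n-1} dt` if `n` odd, `q_n(x) = ∫_0^x q_{n-1} dν` if `n` even. -/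
noncomputable def qIter (ν : Measure ℝ) : ℕ → ℝ → ℝ
  | 0 => fun _ => 1
  | (n+1) => fun x =>
      if Odd (n+1) then ∫ t in Set.Ioc (0:ℝ) x, qIter ν n t
      else ∫ t in Set.Ioc (0:ℝ) x, qIter ν n t ∂ν

noncomputable def spF (ν : Measure ℝ) (z x : ℝ) : ℝ :=
  ∑' n : ℕ, (-1)^n * z^(2*n+1) * pIter ν (2*n+1) x

noncomputable def sqF (ν : Measure ℝ) (z x : ℝ) : ℝ :=
  ∑' n : ℕ, (-1)^n * z^(2*n+1) * qIter ν (2*n+1) x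

noncomputable def cpF (ν : Measure ℝ) (z x : ℝ) : ℝ :=
  ∑' n : ℕ, (-1)^n * z^(2*n) * pIter ν (2*n) x

noncomputable def cqF (ν : Measure ℝ) (z x : ℝ) : ℝ :=
  ∑' n : ℕ, (-1)^n * z^(2*n) * qIter ν (2*n) x

noncomputable def sinpF (ν : Measure ℝ) (z : ℝ) : ℝ := spF ν z 1
noncomputable def sinqF (ν : Measure ℝ) (z : ℝ) : ℝ := sqF ν z 1
noncomputable def cospF (ν : Measure ℝ) (z : ℝ) : ℝ := cpF ν z 1
noncomputable def cosqF (ν : Measure ℝ) (z : ℝ) : ℝ := cqF ν z 1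

/-- distribution function `F(x) = ν [0,x]` -/
noncomputable def distF (ν : Measure ℝ) (x : ℝ) : ℝ := (ν (Set.Icc 0 x)).toReal

/-- supremum distance of two functions over `[0,1]` -/
noncomputable def supDist (f g : ℝ → ℝ) : ℝ := ⨆ x : Set.Icc (0:ℝ) 1, |f x.1 - g x.1|

/-! auxiliary lemmas -/


lemma mono_step (μ : Measure ℝ) (hfin : ∀ x : ℝ, μ (Set.Ioc 0 x) ≠ ⊤)
    (f : ℝ → ℝ) (hf : Monotone f) (h0 : ∀ x, 0 ≤ f x) :
    (∀ x : ℝ, IntegrableOn f (Set.Ioc 0 x) μ) ∧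
    Monotone (fun x => ∫ t in Set.Ioc (0:ℝ) x, f t ∂μ) ∧
    (∀ x, 0 ≤ ∫ t in Set.Ioc (0:ℝ) x, f t ∂μ) := by
  have hint : ∀ x : ℝ, IntegrableOn f (Set.Ioc 0 x) μ := by
    intro x
    haveI : IsFiniteMeasure (μ.restrict (Set.Ioc 0 x)) :=
      ⟨by rw [Measure.restrict_apply_univ]; exact (hfin x).lt_top⟩
    refine Integrable.mono' (integrable_const (f x))
      hf.measurable.aestronglyMeasurable.restrict ?_
    refine ae_restrict_of_forall_mem measurableSet_Ioc (fun t ht => ?_)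
    rw [Real.norm_eq_abs, abs_of_nonneg (h0 t)]
    exact hf ht.2
  refine ⟨hint, ?_, fun x => setIntegral_nonneg measurableSet_Ioc fun t _ => h0 t⟩
  intro x y hxy
  exact setIntegral_mono_set (hint y) (ae_of_all _ h0)
    (HasSubset.Subset.eventuallyLE (Set.Ioc_subset_Ioc_right hxy))

lemma pIter_mono (ν : Measure ℝ) [IsProbabilityMeasure ν] (n : ℕ) :
    Monotone (pIter ν n) ∧ ∀ x, 0 ≤ pIter ν n x := by
  induction n with
  | zero => exact ⟨monotone_const, fun _ => zero_le_one⟩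
  | succ n ih =>
    by_cases h : Odd (n+1)
    · have := mono_step ν (fun x => (measure_lt_top ν _).ne) (pIter ν n) ih.1 ih.2
      simp only [pIter, if_pos h]
      exact ⟨this.2.1, this.2.2⟩
    · have := mono_step volume (fun x => (measure_Ioc_lt_top).ne) (pIter ν n) ih.1 ih.2
      simp only [pIter, if_neg h]
      exact ⟨this.2.1, this.2.2⟩

lemma qIter_mono (ν : Measure ℝ) [IsProbabilityMeasure ν] (n : ℕ) :
    Monotone (qIter ν n) ∧ ∀ x, 0 ≤ qIter ν n x := by
  induction n with
  | zero => exact ⟨monotone_const, fun _ => zero_le_one⟩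
  | succ n ih =>
    by_cases h : Odd (n+1)
    · have := mono_step volume (fun x => (measure_Ioc_lt_top).ne) (qIter ν n) ih.1 ih.2
      simp only [qIter, if_pos h]
      exact ⟨this.2.1, this.2.2⟩
    · have := mono_step ν (fun x => (measure_lt_top ν _).ne) (qIter ν n) ih.1 ih.2
      simp only [qIter, if_neg h]
      exact ⟨this.2.1, this.2.2⟩

lemma pIter_integrableOn_nu (ν : Measure ℝ) [IsProbabilityMeasure ν] (n : ℕ) (x : ℝ) :
    IntegrableOn (pIter ν n) (Set.Ioc 0 x) ν :=
  (mono_step ν (fun x => (measure_lt_top ν _).ne) (pIter ν n)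
    (pIter_mono ν n).1 (pIter_mono ν n).2).1 x

lemma pIter_integrableOn_vol (ν : Measure ℝ) [IsProbabilityMeasure ν] (n : ℕ) (x : ℝ) :
    IntegrableOn (pIter ν n) (Set.Ioc 0 x) volume :=
  (mono_step volume (fun x => (measure_Ioc_lt_top).ne) (pIter ν n)
    (pIter_mono ν n).1 (pIter_mono ν n).2).1 x

lemma qIter_integrableOn_nu (ν : Measure ℝ) [IsProbabilityMeasure ν] (n : ℕ) (x : ℝ) :
    IntegrableOn (qIter ν n) (Set.Ioc 0 x) ν :=
  (mono_step ν (fun x => (measure_lt_top ν _).ne) (qIter ν n)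
    (qIter_mono ν n).1 (qIter_mono ν n).2).1 x

lemma qIter_integrableOn_vol (ν : Measure ℝ) [IsProbabilityMeasure ν] (n : ℕ) (x : ℝ) :
    IntegrableOn (qIter ν n) (Set.Ioc 0 x) volume :=
  (mono_step volume (fun x => (measure_Ioc_lt_top).ne) (qIter ν n)
    (qIter_mono ν n).1 (qIter_mono ν n).2).1 x

/-- integral w.r.t. a probability measure bounded by a constant bound -/
lemma int_nu_le (ν : Measure ℝ) [IsProbabilityMeasure ν] {f : ℝ → ℝ} {x c : ℝ}
    (hc : 0 ≤ c) (hint : IntegrableOn f (Set.Ioc 0 x) ν)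
    (hb : ∀ t ∈ Set.Ioc (0:ℝ) x, f t ≤ c) :
    ∫ t in Set.Ioc (0:ℝ) x, f t ∂ν ≤ c := by
  calc ∫ t in Set.Ioc (0:ℝ) x, f t ∂ν
      ≤ ∫ _ in Set.Ioc (0:ℝ) x, c ∂ν := by
        refine setIntegral_mono_on hint (integrable_const c) measurableSet_Ioc hb
    _ = (ν (Set.Ioc 0 x)).toReal • c := by rw [setIntegral_const]; rfl
    _ ≤ 1 * c := by
        rw [smul_eq_mul]
        refine mul_le_mul_of_nonneg_right ?_ hc
        have h1 := prob_le_one (μ := ν) (s := Set.Ioc 0 x)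
        simpa using ENNReal.toReal_mono ENNReal.one_ne_top h1
    _ = c := one_mul c

/-- Lebesgue integral of something bounded by `t^n/n!` over `Ioc 0 x`. -/
lemma int_vol_le (n : ℕ) {f : ℝ → ℝ} {x : ℝ} (hx : 0 ≤ x)
    (hint : IntegrableOn f (Set.Ioc 0 x) volume)
    (hb : ∀ t ∈ Set.Ioc (0:ℝ) x, f t ≤ t ^ n / (n ! : ℝ)) :
    ∫ t in Set.Ioc (0:ℝ) x, f t ≤ x ^ (n+1) / ((n+1)! : ℝ) := by
  have hcont : Continuous fun t : ℝ => t ^ n / (n ! : ℝ) :=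
    (continuous_pow n).div_const _
  calc ∫ t in Set.Ioc (0:ℝ) x, f t
      ≤ ∫ t in Set.Ioc (0:ℝ) x, t ^ n / (n ! : ℝ) := by
        refine setIntegral_mono_on hint (hcont.integrableOn_Ioc) measurableSet_Ioc hb
    _ = ∫ t in (0:ℝ)..x, t ^ n / (n ! : ℝ) := (intervalIntegral.integral_of_le hx).symm
    _ = (∫ t in (0:ℝ)..x, t ^ n) / n ! := intervalIntegral.integral_div _ _
    _ = x ^ (n+1) / ((n+1)! : ℝ) := by
        rw [integral_pow, Nat.factorial_succ]
        push_cast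
        rw [zero_pow (Nat.succ_ne_zero n), div_div]
        ring_nf

lemma pIter_odd_eq (ν : Measure ℝ) (n : ℕ) (x : ℝ) :
    pIter ν (2*n+1) x = ∫ t in Set.Ioc (0:ℝ) x, pIter ν (2*n) t ∂ν := by
  have h : Odd (2*n+1) := odd_two_mul_add_one n
  simp only [pIter, if_pos h]

lemma pIter_even_eq (ν : Measure ℝ) (n : ℕ) (x : ℝ) :
    pIter ν (2*n+1+1) x = ∫ t in Set.Ioc (0:ℝ) x, pIter ν (2*n+1) t := by
  have h : ¬ Odd (2*n+1+1) := by simp [Nat.odd_iff, Nat.add_mod, Nat.mul_mod]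
  simp only [pIter, if_neg h]

lemma qIter_odd_eq (ν : Measure ℝ) (n : ℕ) (x : ℝ) :
    qIter ν (2*n+1) x = ∫ t in Set.Ioc (0:ℝ) x, qIter ν (2*n) t := by
  have h : Odd (2*n+1) := odd_two_mul_add_one n
  simp only [qIter, if_pos h]

lemma qIter_even_eq (ν : Measure ℝ) (n : ℕ) (x : ℝ) :
    qIter ν (2*n+1+1) x = ∫ t in Set.Ioc (0:ℝ) x, qIter ν (2*n+1) t ∂ν := by
  have h : ¬ Odd (2*n+1+1) := by simp [Nat.odd_iff, Nat.add_mod, Nat.mul_mod]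
  simp only [qIter, if_neg h]

lemma pIter_bound (ν : Measure ℝ) [IsProbabilityMeasure ν] (n : ℕ) :
    ∀ x ∈ Set.Icc (0:ℝ) 1,
      pIter ν (2*n) x ≤ x ^ n / (n ! : ℝ) ∧ pIter ν (2*n+1) x ≤ x ^ n / (n ! : ℝ) := by
  induction n with
  | zero =>
    intro x hx
    refine ⟨by simp [pIter], ?_⟩
    rw [pIter_odd_eq ν 0 x]
    have : pIter ν (2*0) = fun _ : ℝ => (1:ℝ) := rfl
    rw [this]
    simpa using int_nu_le ν zero_le_one (integrable_const 1)
      (fun t _ => le_refl (1:ℝ))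
  | succ n ih =>
    intro x hx
    obtain ⟨hx0, hx1⟩ := hx
    have heven : pIter ν (2*(n+1)) x ≤ x ^ (n+1) / ((n+1)! : ℝ) := by
      have e : 2*(n+1) = 2*n+1+1 := by ring
      rw [e, pIter_even_eq]
      refine int_vol_le n hx0 (pIter_integrableOn_vol ν _ x) (fun t ht => ?_)
      exact (ih t ⟨le_of_lt ht.1, ht.2.trans hx1⟩).2
    refine ⟨heven, ?_⟩
    rw [pIter_odd_eq]
    refine int_nu_le ν (by positivity) (pIter_integrableOn_nu ν _ x) (fun t ht => ?_)
    have e : 2*(n+1) = 2*n+1+1 := by ring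
    have hb : pIter ν (2*(n+1)) t ≤ t ^ (n+1) / ((n+1)! : ℝ) := by
      rw [e, pIter_even_eq]
      refine int_vol_le n (le_of_lt ht.1) (pIter_integrableOn_vol ν _ t) (fun s hs => ?_)
      exact (ih s ⟨le_of_lt hs.1, (hs.2.trans ht.2).trans hx1⟩).2
    refine hb.trans ?_
    gcongr
    exacts [le_of_lt ht.1, ht.2]

lemma qIter_bound (ν : Measure ℝ) [IsProbabilityMeasure ν] (n : ℕ) :
    ∀ x ∈ Set.Icc (0:ℝ) 1,
      qIter ν (2*n) x ≤ x ^ n / (n ! : ℝ) ∧ qIter ν (2*n+1) x ≤ x ^ (n+1) / ((n+1)! : ℝ) := by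
  induction n with
  | zero =>
    intro x hx
    refine ⟨by simp [qIter], ?_⟩
    rw [qIter_odd_eq ν 0 x]
    have h0 : qIter ν (2*0) = fun _ : ℝ => (1:ℝ) := rfl
    rw [h0]
    have := int_vol_le 0 hx.1 (integrable_const 1) (fun t _ => by simp)
    simpa using this
  | succ n ih =>
    intro x hx
    obtain ⟨hx0, hx1⟩ := hx
    have heven : qIter ν (2*(n+1)) x ≤ x ^ (n+1) / ((n+1)! : ℝ) := by
      have e : 2*(n+1) = 2*n+1+1 := by ring
      rw [e, qIter_even_eq]
      refine int_nu_le ν (by positivity) (qIter_integrableOn_nu ν _ x) (fun t ht => ?_)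
      have := (ih t ⟨le_of_lt ht.1, ht.2.trans hx1⟩).2
      refine this.trans ?_
      gcongr
      exacts [le_of_lt ht.1, ht.2]
    refine ⟨heven, ?_⟩
    have e2 : 2*(n+1)+1 = 2*(n+1)+1 := rfl
    rw [show 2*(n+1)+1 = 2*(n+1)+1 from rfl, qIter_odd_eq]
    refine int_vol_le (n+1) hx0 (qIter_integrableOn_vol ν _ x) (fun t ht => ?_)
    have e : 2*(n+1) = 2*n+1+1 := by ring
    rw [e, qIter_even_eq]
    refine int_nu_le ν (div_nonneg (pow_nonneg ht.1.le _) (by positivity))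
      (qIter_integrableOn_nu ν _ t) (fun s hs => ?_)
    have := (ih s ⟨le_of_lt hs.1, (hs.2.trans ht.2).trans hx1⟩).2
    refine this.trans ?_
    gcongr
    exacts [le_of_lt hs.1, hs.2]

lemma series_pkg {g : ℕ → ℝ → ℝ} {u : ℕ → ℝ} (hu : Summable u)
    (h0 : ∀ n x, 0 ≤ g n x)
    (hb : ∀ n x, x ∈ Set.Icc (0:ℝ) 1 → g n x ≤ u n) :
    (∀ x ∈ Set.Icc (0:ℝ) 1, Summable (fun n => g n x) ∧ (∑' n, g n x) ≤ ∑' n, u n) ∧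
    TendstoUniformlyOn (fun N x => ∑ n ∈ Finset.range N, g n x)
      (fun x => ∑' n, g n x) atTop (Set.Icc 0 1) := by
  constructor
  · intro x hx
    have hs : Summable fun n => g n x :=
      Summable.of_nonneg_of_le (fun n => h0 n x) (fun n => hb n x hx) hu
    exact ⟨hs, Summable.tsum_le_tsum (fun n => hb n x hx) hs hu⟩
  · refine tendstoUniformlyOn_tsum_nat hu (fun n x hx => ?_)
    rw [Real.norm_eq_abs, abs_of_nonneg (h0 n x)]
    exact hb n x hx


/-- For fixed `z ∈ ℝ`, the four series defining `sp_z, sq_z, cp_z, cq_z` converge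
absolutely and uniformly on `[0,1]`, with `∑ |z|^(2n+1) |p_{2n+1}(x)| ≤ |z| e^{z²}`
and analogous bounds for the other three series. -/
theorem stmt1 (ν : Measure ℝ) [IsProbabilityMeasure ν] [NullSingletonClass ν]
    (hsupp : ν (Set.Icc (0:ℝ) 1)ᶜ = 0) (z : ℝ) :
    (∀ x ∈ Set.Icc (0:ℝ) 1,
      (Summable fun n : ℕ => |z|^(2*n+1) * |pIter ν (2*n+1) x|) ∧
      (∑' n : ℕ, |z|^(2*n+1) * |pIter ν (2*n+1) x|) ≤ |z| * Real.exp (z^2) ∧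
      (Summable fun n : ℕ => |z|^(2*n+1) * |qIter ν (2*n+1) x|) ∧
      (∑' n : ℕ, |z|^(2*n+1) * |qIter ν (2*n+1) x|) ≤ |z| * Real.exp (z^2) ∧
      (Summable fun n : ℕ => |z|^(2*n) * |pIter ν (2*n) x|) ∧
      (∑' n : ℕ, |z|^(2*n) * |pIter ν (2*n) x|) ≤ Real.exp (z^2) ∧
      (Summable fun n : ℕ => |z|^(2*n) * |qIter ν (2*n) x|) ∧
      (∑' n : ℕ, |z|^(2*n) * |qIter ν (2*n) x|) ≤ Real.exp (z^2)) ∧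
    TendstoUniformlyOn
      (fun N x => ∑ n ∈ Finset.range N, |z|^(2*n+1) * |pIter ν (2*n+1) x|)
      (fun x => ∑' n : ℕ, |z|^(2*n+1) * |pIter ν (2*n+1) x|) atTop (Set.Icc 0 1) ∧
    TendstoUniformlyOn
      (fun N x => ∑ n ∈ Finset.range N, |z|^(2*n+1) * |qIter ν (2*n+1) x|)
      (fun x => ∑' n : ℕ, |z|^(2*n+1) * |qIter ν (2*n+1) x|) atTop (Set.Icc 0 1) ∧
    TendstoUniformlyOn
      (fun N x => ∑ n ∈ Finset.range N, |z|^(2*n) * |pIter ν (2*n) x|)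
      (fun x => ∑' n : ℕ, |z|^(2*n) * |pIter ν (2*n) x|) atTop (Set.Icc 0 1) ∧
    TendstoUniformlyOn
      (fun N x => ∑ n ∈ Finset.range N, |z|^(2*n) * |qIter ν (2*n) x|)
      (fun x => ∑' n : ℕ, |z|^(2*n) * |qIter ν (2*n) x|) atTop (Set.Icc 0 1) := by

  have hexp : (∑' n : ℕ, (z^2)^n / (n ! : ℝ)) = Real.exp (z^2) := by
    rw [Real.exp_eq_exp_ℝ, NormedSpace.exp_eq_tsum_div]
  have huB : Summable (fun n : ℕ => (z^2)^n / (n ! : ℝ)) :=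
    Real.summable_pow_div_factorial (z^2)
  have huA : Summable (fun n : ℕ => |z| * ((z^2)^n / (n ! : ℝ))) := huB.mul_left _
  have htA : (∑' n : ℕ, |z| * ((z^2)^n / (n ! : ℝ))) = |z| * Real.exp (z^2) := by
    rw [tsum_mul_left, hexp]
  have hz2 : ∀ n : ℕ, |z|^(2*n+1) = |z| * (z^2)^n := fun n => by
    rw [pow_succ, pow_mul, sq_abs, mul_comm]
  have hz2' : ∀ n : ℕ, |z|^(2*n) = (z^2)^n := fun n => by rw [pow_mul, sq_abs]
  have hfac : ∀ n : ℕ, (0:ℝ) < (n ! : ℝ) := fun n => by exact_mod_cast Nat.factorial_pos n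
  -- the four pointwise bounds
  have bp1 : ∀ (n : ℕ) (x : ℝ), x ∈ Set.Icc (0:ℝ) 1 →
      |z|^(2*n+1) * |pIter ν (2*n+1) x| ≤ |z| * ((z^2)^n / (n ! : ℝ)) := by
    intro n x hx
    rw [abs_of_nonneg ((pIter_mono ν _).2 x), hz2 n, mul_assoc]
    refine mul_le_mul_of_nonneg_left ?_ (abs_nonneg z)
    have h1 : pIter ν (2*n+1) x ≤ 1 / (n ! : ℝ) := by
      refine ((pIter_bound ν n x hx).2).trans ?_
      gcongr
      exact pow_le_one₀ hx.1 hx.2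
    calc (z^2)^n * pIter ν (2*n+1) x
        ≤ (z^2)^n * (1 / (n ! : ℝ)) :=
          mul_le_mul_of_nonneg_left h1 (pow_nonneg (sq_nonneg z) n)
      _ = (z^2)^n / (n ! : ℝ) := by ring
  have bq1 : ∀ (n : ℕ) (x : ℝ), x ∈ Set.Icc (0:ℝ) 1 →
      |z|^(2*n+1) * |qIter ν (2*n+1) x| ≤ |z| * ((z^2)^n / (n ! : ℝ)) := by
    intro n x hx
    rw [abs_of_nonneg ((qIter_mono ν _).2 x), hz2 n, mul_assoc]
    refine mul_le_mul_of_nonneg_left ?_ (abs_nonneg z)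
    have h1 : qIter ν (2*n+1) x ≤ 1 / (n ! : ℝ) := by
      refine ((qIter_bound ν n x hx).2).trans ?_
      have : ((n ! : ℕ) : ℝ) ≤ (((n+1)! : ℕ) : ℝ) := by
        exact_mod_cast Nat.factorial_le (Nat.le_succ n)
      calc x^(n+1) / (((n+1)! : ℕ) : ℝ) ≤ 1 / (((n+1)! : ℕ) : ℝ) := by
            gcongr
            exact pow_le_one₀ hx.1 hx.2
        _ ≤ 1 / (n ! : ℝ) := by
            gcongr
    calc (z^2)^n * qIter ν (2*n+1) x
        ≤ (z^2)^n * (1 / (n ! : ℝ)) :=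
          mul_le_mul_of_nonneg_left h1 (pow_nonneg (sq_nonneg z) n)
      _ = (z^2)^n / (n ! : ℝ) := by ring
  have bp0 : ∀ (n : ℕ) (x : ℝ), x ∈ Set.Icc (0:ℝ) 1 →
      |z|^(2*n) * |pIter ν (2*n) x| ≤ (z^2)^n / (n ! : ℝ) := by
    intro n x hx
    rw [abs_of_nonneg ((pIter_mono ν _).2 x), hz2' n]
    have h1 : pIter ν (2*n) x ≤ 1 / (n ! : ℝ) := by
      refine ((pIter_bound ν n x hx).1).trans ?_
      gcongr
      exact pow_le_one₀ hx.1 hx.2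
    calc (z^2)^n * pIter ν (2*n) x
        ≤ (z^2)^n * (1 / (n ! : ℝ)) :=
          mul_le_mul_of_nonneg_left h1 (pow_nonneg (sq_nonneg z) n)
      _ = (z^2)^n / (n ! : ℝ) := by ring
  have bq0 : ∀ (n : ℕ) (x : ℝ), x ∈ Set.Icc (0:ℝ) 1 →
      |z|^(2*n) * |qIter ν (2*n) x| ≤ (z^2)^n / (n ! : ℝ) := by
    intro n x hx
    rw [abs_of_nonneg ((qIter_mono ν _).2 x), hz2' n]
    have h1 : qIter ν (2*n) x ≤ 1 / (n ! : ℝ) := by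
      refine ((qIter_bound ν n x hx).1).trans ?_
      gcongr
      exact pow_le_one₀ hx.1 hx.2
    calc (z^2)^n * qIter ν (2*n) x
        ≤ (z^2)^n * (1 / (n ! : ℝ)) :=
          mul_le_mul_of_nonneg_left h1 (pow_nonneg (sq_nonneg z) n)
      _ = (z^2)^n / (n ! : ℝ) := by ring
  have n0 : ∀ (k : ℕ) (f : ℝ → ℝ) (x : ℝ), (0:ℝ) ≤ |z|^k * |f x| :=
    fun k f x => mul_nonneg (pow_nonneg (abs_nonneg z) k) (abs_nonneg _)
  have P1 := series_pkg (g := fun n x => |z|^(2*n+1) * |pIter ν (2*n+1) x|) huA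
    (fun n x => n0 _ _ _) bp1
  have Q1 := series_pkg (g := fun n x => |z|^(2*n+1) * |qIter ν (2*n+1) x|) huA
    (fun n x => n0 _ _ _) bq1
  have P0 := series_pkg (g := fun n x => |z|^(2*n) * |pIter ν (2*n) x|) huB
    (fun n x => n0 _ _ _) bp0
  have Q0 := series_pkg (g := fun n x => |z|^(2*n) * |qIter ν (2*n) x|) huB
    (fun n x => n0 _ _ _) bq0
  refine ⟨fun x hx => ⟨(P1.1 x hx).1, (P1.1 x hx).2.trans_eq htA,
    (Q1.1 x hx).1, (Q1.1 x hx).2.trans_eq htA,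
    (P0.1 x hx).1, (P0.1 x hx).2.trans_eq hexp,
    (Q0.1 x hx).1, (Q0.1 x hx).2.trans_eq hexp⟩,
    P1.2, Q1.2, P0.2, Q0.2⟩
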